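/- arXiv:2101.07949 — 7 statements merged into one kernel-verified Lean document; each statement's English description precedes it below -/
import Mathlib

section
/- The barycentric differentiation matrix D exactly differentiates the constant function: D applied to the vector (1,1,…,1) gives the zero vector, and more generally if r is the barycentric rational interpolant of nodal data (f_0,…,f_N) that has no pole at x_i, then r'(x_i) = Σ_j D_{ij} f_j. -/
/-!
Writing `Σⱼ Dᵢⱼ fⱼ = Σ_{j ≠ i} Dᵢⱼ (fⱼ - fᵢ)` (the diagonal is minus the off-diagonal row sum)
gives `D 1 = 0` at once. For the derivative, multiply numerator and denominator of the
barycentric formula by `t - xᵢ`: near `xᵢ` the interpolant becomes `A / B` with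
`A t = lᵢ fᵢ + (t - xᵢ) Σ_{j ≠ i} lⱼ fⱼ / (t - xⱼ)` and `B t = lᵢ + (t - xᵢ) Σ_{j ≠ i} lⱼ / (t - xⱼ)`,
both smooth at `xᵢ` with `B xᵢ = lᵢ ≠ 0`, and the quotient rule gives the row of `D`.
-/

open Filter Finset Topology

namespace Matrix

variable {ι R : Type*} [Fintype ι] [DecidableEq ι] [CommRing R]

theorem sum_mul_eq_sum_erase_mul_sub {A : Matrix ι ι R} {i : ι}
    (hA : A i i = -∑ k ∈ univ.erase i, A i k) (v : ι → R) :
    ∑ j, A i j * v j = ∑ j ∈ univ.erase i, A i j * (v j - v i) := by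
  rw [← add_sum_erase _ _ (mem_univ i), hA]
  simp only [mul_sub, sum_sub_distrib, ← sum_mul]
  ring

theorem mulVec_const_eq_zero_of_diag_eq_neg_sum {A : Matrix ι ι R}
    (hA : ∀ i, A i i = -∑ k ∈ univ.erase i, A i k) (c : R) :
    A *ᵥ (fun _ => c) = 0 := by
  funext i
  simp [mulVec, dotProduct, sum_mul_eq_sum_erase_mul_sub (hA i)]

end Matrix

namespace Barycentric

variable {ι : Type*} [Fintype ι] [DecidableEq ι]

noncomputable def clearedSum (x w : ι → ℝ) (i : ι) (t : ℝ) : ℝ :=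
  w i + (t - x i) * ∑ j ∈ univ.erase i, w j / (t - x j)

variable {x : ι → ℝ}

theorem clearedSum_self (w : ι → ℝ) (i : ι) : clearedSum x w i (x i) = w i := by
  simp [clearedSum]

theorem clearedSum_eq_mul_sum (w : ι → ℝ) {i : ι} {t : ℝ} (ht : t ≠ x i) :
    clearedSum x w i t = (t - x i) * ∑ j, w j / (t - x j) := by
  rw [clearedSum, ← add_sum_erase _ _ (mem_univ i), mul_add,
    mul_div_cancel₀ _ (sub_ne_zero.2 ht)]

theorem hasDerivAt_clearedSum (hx : Function.Injective x) (w : ι → ℝ) (i : ι) :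
    HasDerivAt (clearedSum x w i) (∑ j ∈ univ.erase i, w j / (x i - x j)) (x i) := by
  have hsum : HasDerivAt (fun t => ∑ j ∈ univ.erase i, w j / (t - x j))
      (∑ j ∈ univ.erase i, (0 * (x i - x j) - w j * 1) / (x i - x j) ^ 2) (x i) :=
    HasDerivAt.fun_sum fun j hj => (hasDerivAt_const (x i) (w j)).div
      ((hasDerivAt_id (x i)).sub_const (x j)) (sub_ne_zero.2 (hx.ne (ne_of_mem_erase hj).symm))
  have h := (((hasDerivAt_id (x i)).sub_const (x i)).fun_mul hsum).const_add (w i)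
  simp only [id, sub_self, zero_mul, one_mul, add_zero] at h
  exact h

theorem eventually_ne_other_nodes (hx : Function.Injective x) (i : ι) :
    ∀ᶠ t in 𝓝 (x i), ∀ j, j ≠ i → t ≠ x j :=
  eventually_all.2 fun j => by
    by_cases hj : j = i
    · exact Eventually.of_forall fun _ h => absurd hj h
    · filter_upwards [eventually_ne_nhds (hx.ne (Ne.symm hj))] with t ht _ using ht

theorem hasDerivAt_interpolant {x l f : ι → ℝ} (hx : Function.Injective x) {i : ι}
    (hli : l i ≠ 0) {R : ℝ → ℝ}
    (hR : ∀ t, (∀ j, t ≠ x j) → R t = (∑ j, l j * f j / (t - x j)) / (∑ j, l j / (t - x j)))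
    (hRi : R (x i) = f i) :
    HasDerivAt R (∑ j ∈ univ.erase i, l j / l i * (1 / (x i - x j)) * (f j - f i)) (x i) := by
  have hquot := (hasDerivAt_clearedSum hx (fun j => l j * f j) i).div
    (hasDerivAt_clearedSum hx l i) (by rwa [clearedSum_self])
  have hlocal :
      R =ᶠ[𝓝 (x i)] fun t => clearedSum x (fun j => l j * f j) i t / clearedSum x l i t := by
    filter_upwards [eventually_ne_other_nodes hx i] with t ht
    by_cases hti : t = x i
    · simp [hti, hRi, clearedSum_self, hli]
    · have hnodes : ∀ j, t ≠ x j := fun j =>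
        (eq_or_ne j i).elim (fun hj => hj ▸ hti) (ht j)
      rw [hR t hnodes, clearedSum_eq_mul_sum _ hti, clearedSum_eq_mul_sum _ hti,
        mul_div_mul_left _ _ (sub_ne_zero.2 hti)]
  refine (hquot.congr_of_eventuallyEq hlocal).congr_deriv ?_
  rw [clearedSum_self, clearedSum_self, mul_sum, sum_mul, ← sum_sub_distrib, sum_div]
  refine sum_congr rfl fun j hj => ?_
  have hne : x i - x j ≠ 0 := sub_ne_zero.2 (hx.ne (ne_of_mem_erase hj).symm)
  field_simp

end Barycentric

theorem diff_matrix_exact_general (N : ℕ) (x : Fin (N+1) → ℝ) (hx : Function.Injective x)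
    (l f : Fin (N+1) → ℝ) (hl : ∀ i, l i ≠ 0)
    (D : Matrix (Fin (N+1)) (Fin (N+1)) ℝ)
    (hD : ∀ i j, i ≠ j → D i j = (l j / l i) * (1 / (x i - x j)))
    (hDd : ∀ i, D i i = -∑ k ∈ Finset.univ.erase i, (l k / l i) * (1 / (x i - x k)))
    (R : ℝ → ℝ)
    (hR : ∀ t, (∀ i, t ≠ x i) →
      R t = (∑ i, l i * f i / (t - x i)) / (∑ i, l i / (t - x i)))
    (hRi : ∀ i, R (x i) = f i)
    (i : Fin (N+1)) :
    D.mulVec (fun _ => 1) = 0 ∧ deriv R (x i) = ∑ j, D i j * f j := by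
  have hoff : ∀ k, ∀ j ∈ univ.erase k, D k j = l j / l k * (1 / (x k - x j)) :=
    fun k j hj => hD k j (ne_of_mem_erase hj).symm
  have hdiag : ∀ k, D k k = -∑ j ∈ univ.erase k, D k j := fun k => by
    rw [hDd k, sum_congr rfl (hoff k)]
  refine ⟨Matrix.mulVec_const_eq_zero_of_diag_eq_neg_sum hdiag 1, ?_⟩
  rw [(Barycentric.hasDerivAt_interpolant hx (hl i) hR (hRi i)).deriv,
    Matrix.sum_mul_eq_sum_erase_mul_sub (hdiag i)]
  exact sum_congr rfl fun j hj => by rw [hoff i j hj]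

/-- The barycentric differentiation matrix kills constants and differentiates the interpolant
exactly at the nodes where it has no pole. -/
theorem diff_matrix_exact (N : ℕ) (x : Fin (N+1) → ℝ) (hx : Function.Injective x)
    (l f : Fin (N+1) → ℝ) (hl : ∀ i, l i ≠ 0)
    (D : Matrix (Fin (N+1)) (Fin (N+1)) ℝ)
    (hD : ∀ i j, i ≠ j → D i j = (l j / l i) * (1 / (x i - x j)))
    (hDd : ∀ i, D i i = -∑ k ∈ Finset.univ.erase i, (l k / l i) * (1 / (x i - x k)))
    (R : ℝ → ℝ)
    (hR : ∀ t, (∀ i, t ≠ x i) →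
      R t = (∑ i, l i * f i / (t - x i)) / (∑ i, l i / (t - x i)))
    (hRi : ∀ i, R (x i) = f i)
    (i : Fin (N+1)) (hdiff : DifferentiableAt ℝ R (x i)) :
    D.mulVec (fun _ => 1) = 0 ∧ deriv R (x i) = ∑ j, D i j * f j :=
  diff_matrix_exact_general N x hx l f hl D hD hDd R hR hRi i
end

section
/- Newman's rational function r(x) = x(p(x)−p(−x))/(p(x)+p(−x)), where p(x) = Π_{k=0}^{N−1}(x+ξ^k) with ξ = e^{−1/√N}, satisfies ‖|x| − r(x)‖_{∞,[−1,1]} ≤ 3 e^{−√N} for all N ≥ 4. -/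
/-!
For `x ≥ 0` the error is `|x| - r x = 2 x p(-x) / (p x + p(-x))`, and it is even in `x`.
If `x ≤ ξ ^ N = exp (-√N)`, then `0 ≤ p(-x) ≤ p x` and the error is at most `x`.
Otherwise put `x ∈ [ξ ^ (m + 1), ξ ^ m]`. Since `(1 - t) / (1 + t) ≤ exp (-2t)`, the factor
`|ξ ^ k - x| / (ξ ^ k + x)` is at most `exp (-2 c_k)`, where `c_k` is `ξ ^ (m + 1 - k)` or
`ξ ^ (k - m)`. The `c_k` form two geometric series whose total is at least
`ξ (1 - ξ ^ N) / (1 - ξ) ≥ √N / 2`, so `|p(-x)| ≤ exp (-√N) p x`, and the error is at most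
`2 exp (-√N) / (1 - exp (-√N)) ≤ 3 exp (-√N)`.
-/

open Finset Real

lemma one_sub_le_exp_neg_two_mul_mul_one_add {t : ℝ} (ht : 0 ≤ t) :
    1 - t ≤ exp (-(2 * t)) * (1 + t) := by
  rcases lt_or_ge t 1 with ht1 | ht1
  · -- the first term of `log (1 + t) - log (1 - t) = 2 (t + t³/3 + t⁵/5 + ⋯)`
    have hlog : 2 * t ≤ log (1 + t) - log (1 - t) := by
      have hs := hasSum_log_sub_log_of_abs_lt_one (abs_lt.2 ⟨by linarith, ht1⟩)
      simpa using le_hasSum hs 0 fun k _ => by positivity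
    have hexp : exp (2 * t) * (1 - t) ≤ 1 + t := by
      rw [← log_div (by linarith) (by linarith)] at hlog
      have := exp_le_exp.2 hlog
      rwa [exp_log (div_pos (by linarith) (by linarith)), le_div_iff₀ (by linarith)] at this
    calc 1 - t = exp (-(2 * t)) * (exp (2 * t) * (1 - t)) := by
          rw [← mul_assoc, ← exp_add, neg_add_cancel, exp_zero, one_mul]
      _ ≤ exp (-(2 * t)) * (1 + t) := by gcongr
  · nlinarith [exp_pos (-(2 * t))]

lemma abs_sub_le_exp_mul_add {a b c : ℝ} (ha : 0 < a) (hb : 0 < b) (hca : c * a ≤ b)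
    (hcb : c * b ≤ a) : |a - b| ≤ exp (-(2 * c)) * (a + b) := by
  wlog hba : b ≤ a generalizing a b
  · rw [abs_sub_comm, add_comm]
    exact this hb ha hcb hca (by linarith)
  have hc : c ≤ b / a := (le_div_iff₀ ha).2 hca
  calc |a - b| = a * (1 - b / a) := by
        rw [abs_of_nonneg (by linarith), mul_one_sub, mul_div_cancel₀ _ ha.ne']
    _ ≤ a * (exp (-(2 * (b / a))) * (1 + b / a)) := by
        gcongr; exact one_sub_le_exp_neg_two_mul_mul_one_add (by positivity)
    _ ≤ a * (exp (-(2 * c)) * (1 + b / a)) := by gcongr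
    _ = exp (-(2 * c)) * (a + b) := by field_simp

lemma exists_pow_succ_le_le_pow {q x : ℝ} (hx : x ≤ 1) :
    ∀ n : ℕ, q ^ (n + 1) ≤ x → ∃ m ≤ n, q ^ (m + 1) ≤ x ∧ x ≤ q ^ m
  | 0, h => ⟨0, le_rfl, by simpa using h, by simpa using hx⟩
  | n + 1, h => by
    by_cases hn : x ≤ q ^ (n + 1)
    · exact ⟨n + 1, le_rfl, h, hn⟩
    · obtain ⟨m, hm, hlo, hhi⟩ := exists_pow_succ_le_le_pow hx n (not_le.1 hn).le
      exact ⟨m, hm.trans n.le_succ, hlo, hhi⟩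

lemma sum_range_pow_succ_mul_one_sub (q : ℝ) (n : ℕ) :
    (∑ j ∈ range n, q ^ (j + 1)) * (1 - q) = q * (1 - q ^ n) := by
  simp_rw [pow_succ', ← mul_sum, mul_assoc, geom_sum_mul_neg]

-- a lower bound for `min (q ^ k / x) (x / q ^ k)` when `q ^ (m + 1) ≤ x ≤ q ^ m`
def newmanRatioBound (q : ℝ) (m k : ℕ) : ℝ :=
  if k ≤ m then q ^ (m + 1 - k) else q ^ (k - m)

lemma sum_newmanRatioBound (q : ℝ) (m n : ℕ) :
    ∑ k ∈ range (m + 1 + n), newmanRatioBound q m k =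
      ∑ j ∈ range (m + 1), q ^ (j + 1) + ∑ j ∈ range n, q ^ (j + 1) := by
  rw [sum_range_add, ← sum_range_reflect]
  congr 1 <;> refine sum_congr rfl fun j hj => ?_
  · rw [mem_range] at hj
    rw [newmanRatioBound, if_pos (by omega)]
    congr 1; omega
  · rw [newmanRatioBound, if_neg (by omega)]
    congr 1; omega

lemma div_le_sum_newmanRatioBound {q : ℝ} (hq0 : 0 ≤ q) (hq1 : q < 1) {m N : ℕ} (hmN : m < N) :
    q * (1 - q ^ N) / (1 - q) ≤ ∑ k ∈ range N, newmanRatioBound q m k := by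
  obtain ⟨n, rfl⟩ : ∃ n, N = m + 1 + n := ⟨N - (m + 1), by omega⟩
  have hsplit : 0 ≤ (1 - q ^ (m + 1)) * (1 - q ^ n) :=
    mul_nonneg (sub_nonneg.2 (pow_le_one₀ hq0 hq1.le)) (sub_nonneg.2 (pow_le_one₀ hq0 hq1.le))
  rw [sum_newmanRatioBound, div_le_iff₀ (by linarith), add_mul,
    sum_range_pow_succ_mul_one_sub, sum_range_pow_succ_mul_one_sub, pow_add]
  nlinarith

lemma newmanRatioBound_mul_le {q x : ℝ} (hq0 : 0 < q) (hq1 : q < 1) {m : ℕ}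
    (hlo : q ^ (m + 1) ≤ x) (hhi : x ≤ q ^ m) (k : ℕ) :
    newmanRatioBound q m k * q ^ k ≤ x ∧ newmanRatioBound q m k * x ≤ q ^ k := by
  have hx : 0 ≤ x := (pow_nonneg hq0.le _).trans hlo
  unfold newmanRatioBound
  split_ifs with hkm
  · refine ⟨by rwa [← pow_add, Nat.sub_add_cancel (by omega)], ?_⟩
    calc q ^ (m + 1 - k) * x ≤ 1 * q ^ m := by
          gcongr; exacts [pow_le_one₀ hq0.le hq1.le]
      _ ≤ q ^ k := by rw [one_mul]; exact pow_le_pow_of_le_one hq0.le hq1.le hkm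
  · constructor
    · calc q ^ (k - m) * q ^ k ≤ 1 * q ^ (m + 1) := by
            apply mul_le_mul (pow_le_one₀ hq0.le hq1.le)
              (pow_le_pow_of_le_one hq0.le hq1.le (by omega)) <;> positivity
        _ ≤ x := by rwa [one_mul]
    · calc q ^ (k - m) * x ≤ q ^ (k - m) * q ^ m := by gcongr
        _ = q ^ k := by rw [← pow_add, Nat.sub_add_cancel (by omega)]

lemma prod_abs_pow_sub_le {q x : ℝ} (hq0 : 0 < q) (hq1 : q < 1) {m N : ℕ} (hmN : m < N)
    (hlo : q ^ (m + 1) ≤ x) (hhi : x ≤ q ^ m) :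
    ∏ k ∈ range N, |q ^ k - x| ≤
      exp (-(2 * (q * (1 - q ^ N) / (1 - q)))) * ∏ k ∈ range N, (q ^ k + x) := by
  have hx : 0 < x := (pow_pos hq0 _).trans_le hlo
  have hfactor : ∀ k ∈ range N,
      |q ^ k - x| ≤ exp (-(2 * newmanRatioBound q m k)) * (q ^ k + x) := fun k _ =>
    have ⟨h₁, h₂⟩ := newmanRatioBound_mul_le hq0 hq1 hlo hhi k
    abs_sub_le_exp_mul_add (pow_pos hq0 k) hx h₁ h₂
  calc ∏ k ∈ range N, |q ^ k - x|
      ≤ ∏ k ∈ range N, exp (-(2 * newmanRatioBound q m k)) * (q ^ k + x) :=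
        prod_le_prod (fun _ _ => abs_nonneg _) hfactor
    _ = exp (-(2 * ∑ k ∈ range N, newmanRatioBound q m k)) * ∏ k ∈ range N, (q ^ k + x) := by
        rw [prod_mul_distrib, ← exp_sum, mul_sum, sum_neg_distrib]
    _ ≤ _ := by
        gcongr
        exact div_le_sum_newmanRatioBound hq0.le hq1 hmN

lemma exp_neg_two_lt : exp (-2) < 1 / 7 := by
  have h : exp (-2) = exp (-1) ^ 2 := by rw [← exp_nat_mul]; norm_num
  rw [h]
  nlinarith [exp_neg_one_lt_d9, exp_pos (-1)]

lemma lt_exp_neg_half : 7 / 12 < exp (-(1 / 2)) := by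
  have h : exp (-(1 / 2)) ^ 2 = exp (-1) := by rw [← exp_nat_mul]; norm_num
  nlinarith [exp_neg_one_gt_d9, exp_pos (-(1 / 2))]

lemma le_two_mul_div_one_sub_exp_neg_inv {s : ℝ} (hs : 2 ≤ s) :
    s ≤ 2 * (exp (-(1 / s)) * (1 - exp (-s)) / (1 - exp (-(1 / s)))) := by
  set q := exp (-(1 / s))
  have hq1 : q < 1 := exp_lt_one_iff.2 (by simp only [one_div, neg_lt_zero, inv_pos]; linarith)
  have hgap : s * (1 - q) ≤ 1 := by
    have := add_one_le_exp (-(1 / s))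
    have : s * (1 / s) = 1 := by field_simp
    nlinarith
  have hq : 7 / 12 < q := lt_exp_neg_half.trans_le <| exp_le_exp.2 <| by
    rw [neg_le_neg_iff]; gcongr
  have hε : exp (-s) < 1 / 7 := (exp_le_exp.2 (by linarith)).trans_lt exp_neg_two_lt
  rw [mul_div_assoc', le_div_iff₀ (by linarith)]
  nlinarith [mul_lt_mul'' hq (show 6 / 7 < 1 - exp (-s) by linarith) (by norm_num) (by norm_num)]

lemma two_le_sqrt_natCast {N : ℕ} (hN : 4 ≤ N) : 2 ≤ √(N : ℝ) :=
  le_sqrt_of_sq_le (by norm_num; exact_mod_cast hN)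

lemma exp_neg_inv_sqrt_pow (N : ℕ) : exp (-(1 / √(N : ℝ))) ^ N = exp (-√(N : ℝ)) := by
  rw [← exp_nat_mul]
  congr 1
  nth_rewrite 1 [← mul_self_sqrt (Nat.cast_nonneg N)]
  rw [mul_neg, ← mul_div_assoc, mul_one, mul_self_div_self]

lemma abs_sub_mul_div_eq {x A B : ℝ} (hx : 0 ≤ x) (hAB : A + B ≠ 0) :
    |x| - x * (A - B) / (A + B) = 2 * x * B / (A + B) := by
  rw [abs_of_nonneg hx]
  field_simp
  ring

lemma abs_abs_sub_mul_div_le_self {x A B : ℝ} (hx : 0 ≤ x) (hA : 0 < A) (hB : 0 ≤ B)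
    (hBA : B ≤ A) : |(|x| - x * (A - B) / (A + B))| ≤ x := by
  rw [abs_sub_mul_div_eq hx (by linarith), abs_of_nonneg (by positivity),
    div_le_iff₀ (by linarith)]
  nlinarith

lemma abs_abs_sub_mul_div_le_three_mul {x A B ε : ℝ} (hx0 : 0 ≤ x) (hx1 : x ≤ 1) (hA : 0 < A)
    (hB : |B| ≤ ε * A) (hε : ε ≤ 1 / 3) : |(|x| - x * (A - B) / (A + B))| ≤ 3 * ε := by
  have hAB : 0 < A + B := by nlinarith [neg_abs_le B]
  have hε0 : 0 ≤ ε := nonneg_of_mul_nonneg_left ((abs_nonneg B).trans hB) hA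
  rw [abs_sub_mul_div_eq hx0 hAB.ne', abs_div, abs_of_pos hAB, div_le_iff₀ hAB, abs_mul,
    abs_of_nonneg (by positivity)]
  calc 2 * x * |B| ≤ 2 * 1 * (ε * A) := by gcongr
    _ ≤ 3 * ε * (A + B) := by
        have : 0 ≤ A + 3 * B := by nlinarith [neg_abs_le B]
        nlinarith [mul_nonneg hε0 this]

noncomputable def newmanPoly (N : ℕ) (x : ℝ) : ℝ :=
  ∏ k ∈ range N, (x + exp (-(1 / √(N : ℝ))) ^ k)

lemma abs_newmanPoly_neg_le {N : ℕ} (hN : 4 ≤ N) {x : ℝ} (hx0 : exp (-√(N : ℝ)) ≤ x)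
    (hx1 : x ≤ 1) : |newmanPoly N (-x)| ≤ exp (-√(N : ℝ)) * newmanPoly N x := by
  have hx : 0 ≤ x := (exp_pos _).le.trans hx0
  set q := exp (-(1 / √(N : ℝ)))
  have hs : 2 ≤ √(N : ℝ) := two_le_sqrt_natCast hN
  have hq1 : q < 1 := exp_lt_one_iff.2 (by simp only [one_div, neg_lt_zero, inv_pos]; linarith)
  have hqN : q ^ N = exp (-√(N : ℝ)) := exp_neg_inv_sqrt_pow N
  obtain ⟨m, hm, hlo, hhi⟩ := exists_pow_succ_le_le_pow hx1 (N - 1) <| by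
    rwa [Nat.sub_add_cancel (by omega), hqN]
  have hprod := prod_abs_pow_sub_le (exp_pos _) hq1 (by omega : m < N) hlo hhi
  rw [hqN] at hprod
  calc |newmanPoly N (-x)| = ∏ k ∈ range N, |q ^ k - x| := by
        rw [newmanPoly, abs_prod]; simp_rw [neg_add_eq_sub]; rfl
    _ ≤ exp (-(2 * (q * (1 - exp (-√(N : ℝ))) / (1 - q)))) * ∏ k ∈ range N, (q ^ k + x) := hprod
    _ ≤ exp (-√(N : ℝ)) * newmanPoly N x := by
        rw [newmanPoly]; simp_rw [add_comm x]
        gcongr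
        exact le_two_mul_div_one_sub_exp_neg_inv hs

lemma newman_error_le_of_nonneg {N : ℕ} (hN : 4 ≤ N) {x : ℝ} (hx0 : 0 ≤ x) (hx1 : x ≤ 1) :
    |(|x| - x * (newmanPoly N x - newmanPoly N (-x)) / (newmanPoly N x + newmanPoly N (-x)))|
      ≤ 3 * exp (-√(N : ℝ)) := by
  set q := exp (-(1 / √(N : ℝ)))
  have hA : 0 < newmanPoly N x :=
    prod_pos fun k _ => add_pos_of_nonneg_of_pos hx0 (pow_pos (exp_pos _) k)
  rcases le_or_gt x (exp (-√(N : ℝ))) with hsmall | hlarge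
  · have hq1 : q ≤ 1 := exp_le_one_iff.2 (by simp only [one_div, neg_nonpos]; positivity)
    have hfactor : ∀ k ∈ range N, 0 ≤ -x + q ^ k := fun k hk => by
      have : q ^ N ≤ q ^ k := pow_le_pow_of_le_one (exp_pos _).le hq1 (mem_range.1 hk).le
      rw [exp_neg_inv_sqrt_pow] at this
      linarith
    have hB : 0 ≤ newmanPoly N (-x) := prod_nonneg hfactor
    have hBA : newmanPoly N (-x) ≤ newmanPoly N x :=
      prod_le_prod hfactor fun k _ => by linarith
    linarith [abs_abs_sub_mul_div_le_self hx0 hA hB hBA, exp_pos (-√(N : ℝ))]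
  · have hs : 2 ≤ √(N : ℝ) := two_le_sqrt_natCast hN
    have hε : exp (-√(N : ℝ)) ≤ 1 / 3 := by
      linarith [exp_neg_two_lt, exp_le_exp.2 (neg_le_neg hs)]
    exact abs_abs_sub_mul_div_le_three_mul hx0 hx1 hA (abs_newmanPoly_neg_le hN hlarge.le hx1) hε

/-- Newman's upper bound: ‖|x| - r(x)‖_{∞,[-1,1]} ≤ 3 e^{-√N} for N ≥ 4. -/
theorem newman_upper_bound (N : ℕ) (hN : 4 ≤ N) :
    ∀ x ∈ Set.Icc (-1 : ℝ) 1,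
      |(|x| - x * ((∏ k ∈ Finset.range N, (x + Real.exp (-(1 / Real.sqrt N)) ^ k)) -
            (∏ k ∈ Finset.range N, (-x + Real.exp (-(1 / Real.sqrt N)) ^ k))) /
          ((∏ k ∈ Finset.range N, (x + Real.exp (-(1 / Real.sqrt N)) ^ k)) +
            (∏ k ∈ Finset.range N, (-x + Real.exp (-(1 / Real.sqrt N)) ^ k))))|
        ≤ 3 * Real.exp (-Real.sqrt N) := by
  rintro x ⟨hx₁, hx₂⟩
  change |(|x| - x * (newmanPoly N x - newmanPoly N (-x)) /
    (newmanPoly N x + newmanPoly N (-x)))| ≤ 3 * exp (-√(N : ℝ))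
  rcases le_total 0 x with hx | hx
  · exact newman_error_le_of_nonneg hN hx hx₂
  · have h := newman_error_le_of_nonneg hN (neg_nonneg.2 hx) (by linarith)
    rw [neg_neg, abs_neg, add_comm (newmanPoly N (-x))] at h
    convert h using 3
    ring
end

section
/- Newman's lower bound: for all N ≥ 4 and any rational function of Newman's form (indeed for the specific r above), the error satisfies ‖|x| − r(x)‖_{∞,[−1,1]} ≥ (1/2) e^{−9√N}. -/
/-!
Take `x = ξ ^ N = e^{-√N}`. There `|x| - r(x) = 2 x p(-x) / (p(x) + p(-x)) ≥ x p(-x) / p(x)`, and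
since `x` is itself a power of `ξ`, `p(-x) / p(x) = ∏_{m=1}^N (1 - ξ^m) / (1 + ξ^m)`. The reciprocal
factors are at most `4√N / m` for `m ≤ √N`, with product at most `(4√N)^⌊√N⌋ / ⌊√N⌋! ≤ e^{4√N}`,
and at most `exp (4 ξ^m)` beyond, where the geometric tail sums to at most `√N`. Hence
`p(-x) / p(x) ≥ e^{-8√N}` and the error at `x` is at least `e^{-9√N}`.
-/

open Finset Real

lemma half_le_one_sub_exp_neg {u : ℝ} (hu0 : 0 ≤ u) (hu1 : u ≤ 1) :
    u / 2 ≤ 1 - exp (-u) := by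
  have h : exp (-u) * (1 + u) ≤ 1 :=
    calc exp (-u) * (1 + u) ≤ exp (-u) * exp u := by gcongr; linarith [add_one_le_exp u]
      _ = 1 := by rw [← exp_add, neg_add_cancel, exp_zero]
  nlinarith [exp_pos (-u)]

lemma le_abs_sub_mul_sub_div_add {x P Q : ℝ} (hx : 0 ≤ x) (hQ : 0 ≤ Q) (hQP : Q ≤ P) :
    x * (Q / P) ≤ |x| - x * (P - Q) / (P + Q) := by
  rcases (hQ.trans hQP).eq_or_lt with hP | hP
  · obtain rfl : Q = 0 := by linarith
    simp [← hP, abs_of_nonneg hx, hx]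
  have hPQ : 0 < P + Q := by linarith
  rw [abs_of_nonneg hx, show x - x * (P - Q) / (P + Q) = 2 * x * Q / (P + Q) by field_simp; ring,
    mul_div_assoc', div_le_div_iff₀ hP hPQ]
  nlinarith [mul_nonneg hx hQ]

/-- Dividing by `a ^ k` turns the `k`-th factor into `(1 - a ^ (N - k)) / (1 + a ^ (N - k))`. -/
lemma prod_neg_pow_add_pow_div_prod {a : ℝ} (ha : 0 < a) (N : ℕ) :
    (∏ k ∈ range N, (-a ^ N + a ^ k)) / ∏ k ∈ range N, (a ^ N + a ^ k) =
      ∏ j ∈ range N, (1 - a ^ (j + 1)) / (1 + a ^ (j + 1)) := by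
  rw [← prod_div_distrib, ← prod_range_reflect]
  refine prod_congr rfl fun k hk => ?_
  have hN : N = k + (N - 1 - k + 1) := by have := mem_range.mp hk; omega
  rw [hN, pow_add, ← hN]
  field_simp
  ring

/-- With `ξ = e^{-1/s}` and `x = ξ^N`, one has `p(x) / p(-x) = ∏_{m=1}^N newmanRatio s m`. -/
noncomputable def newmanRatio (s : ℝ) (m : ℕ) : ℝ :=
  (1 + exp (-(1 / s)) ^ m) / (1 - exp (-(1 / s)) ^ m)

section newmanRatio

variable {s : ℝ}

lemma exp_neg_one_div_pow (s : ℝ) (m : ℕ) : exp (-(1 / s)) ^ m = exp (-(m / s)) := by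
  rw [← exp_nat_mul]; ring_nf

lemma div_two_mul_le_one_sub_exp_neg_one_div_pow (hs : 0 < s) {m : ℕ} (hm : m ≤ s) :
    m / (2 * s) ≤ 1 - exp (-(1 / s)) ^ m := by
  have := half_le_one_sub_exp_neg (u := m / s) (by positivity) ((div_le_one hs).mpr hm)
  rw [exp_neg_one_div_pow]
  convert this using 1
  ring

lemma exp_neg_one_div_pow_le_half (hs : 0 < s) {m : ℕ} (hm : s ≤ m) :
    exp (-(1 / s)) ^ m ≤ 1 / 2 := by
  rw [exp_neg_one_div_pow]
  calc exp (-(m / s)) ≤ exp (-1) := by gcongr; rwa [le_div_iff₀ hs, one_mul]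
    _ ≤ 1 / 2 := exp_neg_one_lt_half.le

lemma one_le_newmanRatio (hs : 0 < s) {m : ℕ} (hm : 0 < m) : 1 ≤ newmanRatio s m := by
  have h0 : 0 < exp (-(1 / s)) ^ m := by positivity
  have h1 : exp (-(1 / s)) ^ m < 1 :=
    pow_lt_one₀ (exp_pos _).le (exp_lt_one_iff.mpr (by simp [hs])) hm.ne'
  rw [newmanRatio, one_le_div (by linarith)]
  linarith

lemma newmanRatio_le_div (hs : 0 < s) {m : ℕ} (hm0 : 0 < m) (hm : m ≤ s) :
    newmanRatio s m ≤ 4 * s / m := by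
  have hlow := div_two_mul_le_one_sub_exp_neg_one_div_pow hs hm
  have hnum : 1 + exp (-(1 / s)) ^ m ≤ 2 := by
    rw [exp_neg_one_div_pow]
    linarith [exp_le_one_iff.mpr (neg_nonpos.mpr (by positivity : (0 : ℝ) ≤ m / s))]
  calc newmanRatio s m ≤ 2 / (m / (2 * s)) := div_le_div₀ zero_le_two hnum (by positivity) hlow
    _ = 4 * s / m := by field_simp; ring

lemma newmanRatio_le_exp (hs : 0 < s) {m : ℕ} (hm : s ≤ m) :
    newmanRatio s m ≤ exp (4 * exp (-(1 / s)) ^ m) := by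
  set t := exp (-(1 / s)) ^ m
  have ht : t ≤ 1 / 2 := exp_neg_one_div_pow_le_half hs hm
  have ht0 : 0 ≤ t := by positivity
  calc newmanRatio s m ≤ 1 + 4 * t := by
        rw [newmanRatio, div_le_iff₀ (by linarith)]; nlinarith
    _ ≤ exp (4 * t) := by linarith [add_one_le_exp (4 * t)]

lemma prod_range_newmanRatio_floor_le (hs : 0 < s) :
    ∏ j ∈ range ⌊s⌋₊, newmanRatio s (j + 1) ≤ exp (4 * s) :=
  calc ∏ j ∈ range ⌊s⌋₊, newmanRatio s (j + 1)
      ≤ ∏ j ∈ range ⌊s⌋₊, 4 * s / (j + 1 : ℕ) := by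
        refine prod_le_prod (fun j _ => zero_le_one.trans (one_le_newmanRatio hs j.succ_pos))
          fun j hj => newmanRatio_le_div hs j.succ_pos ?_
        exact (Nat.le_floor_iff hs.le).mp (mem_range.mp hj)
    _ = (4 * s) ^ ⌊s⌋₊ / (⌊s⌋₊).factorial := by
        rw [prod_div_distrib, prod_const, card_range, ← Nat.cast_prod,
          prod_range_add_one_eq_factorial]
    _ ≤ exp (4 * s) := pow_div_factorial_le_exp _ (by positivity) _

lemma prod_range_newmanRatio_floor_add_le (hs : 1 ≤ s) (N : ℕ) :
    ∏ j ∈ range N, newmanRatio s (⌊s⌋₊ + j + 1) ≤ exp (4 * s) := by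
  set ξ := exp (-(1 / s))
  have hs0 : 0 < s := by linarith
  have hξ1 : ξ < 1 := exp_lt_one_iff.mpr (by simp [hs0])
  have hgeom : ∑ j ∈ range N, ξ ^ (⌊s⌋₊ + j + 1) ≤ s :=
    calc ∑ j ∈ range N, ξ ^ (⌊s⌋₊ + j + 1)
        = ∑ i ∈ Ico (⌊s⌋₊ + 1) (⌊s⌋₊ + 1 + N), ξ ^ i := by
          rw [sum_Ico_eq_sum_range, Nat.add_sub_cancel_left]
          exact sum_congr rfl fun j _ => by ring_nf
      _ ≤ ξ ^ (⌊s⌋₊ + 1) / (1 - ξ) := geom_sum_Ico_le_of_lt_one (exp_pos _).le hξ1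
      _ ≤ (1 / 2) / (1 / (2 * s)) := by
          gcongr
          · exact exp_neg_one_div_pow_le_half hs0 (by exact_mod_cast (Nat.lt_floor_add_one s).le)
          · simpa [ξ] using
              div_two_mul_le_one_sub_exp_neg_one_div_pow hs0 (m := 1) (by simpa using hs)
      _ = s := by field_simp
  calc ∏ j ∈ range N, newmanRatio s (⌊s⌋₊ + j + 1)
      ≤ ∏ j ∈ range N, exp (4 * ξ ^ (⌊s⌋₊ + j + 1)) := by
        refine prod_le_prod
            (fun j _ => zero_le_one.trans (one_le_newmanRatio hs0 (⌊s⌋₊ + j).succ_pos))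
          fun j _ => newmanRatio_le_exp hs0 ?_
        exact_mod_cast (Nat.lt_floor_add_one s).le.trans (by push_cast; linarith)
    _ = exp (4 * ∑ j ∈ range N, ξ ^ (⌊s⌋₊ + j + 1)) := by rw [← exp_sum, mul_sum]
    _ ≤ exp (4 * s) := by gcongr

lemma prod_range_newmanRatio_le (hs : 1 ≤ s) (N : ℕ) :
    ∏ j ∈ range N, newmanRatio s (j + 1) ≤ exp (8 * s) := by
  have hs0 : 0 < s := by linarith
  calc ∏ j ∈ range N, newmanRatio s (j + 1)
      ≤ ∏ j ∈ range (⌊s⌋₊ + N), newmanRatio s (j + 1) :=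
        prod_le_prod_of_subset_of_one_le (range_subset_range.mpr (by omega))
          (fun j _ => zero_le_one.trans (one_le_newmanRatio hs0 j.succ_pos))
          fun j _ _ => one_le_newmanRatio hs0 j.succ_pos
    _ = (∏ j ∈ range ⌊s⌋₊, newmanRatio s (j + 1)) *
          ∏ j ∈ range N, newmanRatio s (⌊s⌋₊ + j + 1) := prod_range_add _ _ _
    _ ≤ exp (4 * s) * exp (4 * s) :=
        mul_le_mul (prod_range_newmanRatio_floor_le hs0) (prod_range_newmanRatio_floor_add_le hs N)
          (prod_nonneg fun j _ =>
            zero_le_one.trans (one_le_newmanRatio hs0 (⌊s⌋₊ + j).succ_pos))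
          (exp_pos _).le
    _ = exp (8 * s) := by rw [← exp_add]; ring_nf

lemma exp_neg_le_prod_range_one_sub_div_one_add (hs : 1 ≤ s) (N : ℕ) :
    exp (-(8 * s)) ≤
      ∏ j ∈ range N, (1 - exp (-(1 / s)) ^ (j + 1)) / (1 + exp (-(1 / s)) ^ (j + 1)) := by
  have hs0 : 0 < s := by linarith
  calc exp (-(8 * s)) = (exp (8 * s))⁻¹ := exp_neg _
    _ ≤ (∏ j ∈ range N, newmanRatio s (j + 1))⁻¹ :=
        inv_anti₀ (prod_pos fun j _ => zero_lt_one.trans_le (one_le_newmanRatio hs0 j.succ_pos))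
          (prod_range_newmanRatio_le hs N)
    _ = _ := by
        rw [← prod_inv_distrib]
        exact prod_congr rfl fun j _ => by rw [newmanRatio, inv_div]

end newmanRatio

/-- Newman's lower bound: ‖|x| - r(x)‖_{∞,[-1,1]} ≥ (1/2) e^{-9√N} for N ≥ 4. -/
theorem newman_lower_bound (N : ℕ) (hN : 4 ≤ N) :
    ∃ x ∈ Set.Icc (-1 : ℝ) 1,
      (1 / 2) * Real.exp (-9 * Real.sqrt N) ≤
      |(|x| - x * ((∏ k ∈ Finset.range N, (x + Real.exp (-(1 / Real.sqrt N)) ^ k)) -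
            (∏ k ∈ Finset.range N, (-x + Real.exp (-(1 / Real.sqrt N)) ^ k))) /
          ((∏ k ∈ Finset.range N, (x + Real.exp (-(1 / Real.sqrt N)) ^ k)) +
            (∏ k ∈ Finset.range N, (-x + Real.exp (-(1 / Real.sqrt N)) ^ k))))| := by
  set s := Real.sqrt N
  set ξ := Real.exp (-(1 / s))
  have hs : 1 ≤ s := Real.one_le_sqrt.mpr (by exact_mod_cast (by omega : 1 ≤ N))
  have hξ : 0 < ξ := exp_pos _
  have hξ1 : ξ ≤ 1 := exp_le_one_iff.mpr (by simp only [one_div, neg_nonpos]; positivity)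
  have hx : ξ ^ N = exp (-s) := by rw [exp_neg_one_div_pow, Real.div_sqrt]
  have hfactor : ∀ k ∈ range N, 0 ≤ -ξ ^ N + ξ ^ k := fun k hk => by
    linarith [pow_le_pow_of_le_one hξ.le hξ1 (mem_range.mp hk).le]
  refine ⟨ξ ^ N, ⟨by linarith [pow_pos hξ N], pow_le_one₀ hξ.le hξ1⟩, ?_⟩
  calc 1 / 2 * exp (-9 * s) ≤ exp (-s) * exp (-(8 * s)) := by
        rw [← exp_add, show -s + -(8 * s) = -9 * s by ring]; linarith [exp_pos (-9 * s)]
    _ ≤ ξ ^ N * ((∏ k ∈ range N, (-ξ ^ N + ξ ^ k)) /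
          ∏ k ∈ range N, (ξ ^ N + ξ ^ k)) := by
        rw [prod_neg_pow_add_pow_div_prod hξ, hx]
        gcongr
        exact exp_neg_le_prod_range_one_sub_div_one_add hs N
    _ ≤ _ := (le_abs_sub_mul_sub_div_add (pow_pos hξ N).le (prod_nonneg hfactor)
          (prod_le_prod hfactor fun k _ => by linarith [pow_pos hξ N])).trans (le_abs_self _)
end

section
/- For the prototype function h(x,z) = 1/(z−x) with z not a node, the barycentric rational interpolant of h(·,z) at nodes x_0,…,x_N with weights λ_i satisfies the exact error formula h(x,z) − r[h](x) = (1/(z−x)) · (Σ_i λ_i/(z−x_i)) / (Σ_i λ_i/(x−x_i)) for all x not equal to any node and not equal to z. -/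
/-!
The whole formula rests on the partial fraction decomposition
`1 / ((z - xᵢ)(t - xᵢ)) = (1 / (t - xᵢ) - 1 / (z - xᵢ)) / (z - t)`: summed against the weights it
writes the numerator of `r[h](t)` as `(D(t) - D(z)) / (z - t)`, where `D(s) = ∑ λᵢ / (s - xᵢ)` is the
barycentric denominator, so the error `1 / (z - t) - r[h](t)` is `D(z) / ((z - t) D(t))`.
-/

section PartialFractions

variable {K : Type*} [Field K]

theorem one_div_sub_div_sub_eq_mul_sub {z t a : K} (hz : z - a ≠ 0) (ht : t - a ≠ 0)
    (hzt : z - t ≠ 0) :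
    1 / (z - a) / (t - a) = 1 / (z - t) * (1 / (t - a) - 1 / (z - a)) := by
  field_simp
  ring

theorem sum_weighted_cauchy_div_eq {ι : Type*} (s : Finset ι) (l x : ι → K) {z t : K}
    (hz : ∀ i, z - x i ≠ 0) (ht : ∀ i, t - x i ≠ 0) (hzt : z - t ≠ 0) :
    ∑ i ∈ s, l i * (1 / (z - x i)) / (t - x i) =
      1 / (z - t) * (∑ i ∈ s, l i / (t - x i) - ∑ i ∈ s, l i / (z - x i)) := by
  rw [← Finset.sum_sub_distrib, Finset.mul_sum]
  refine Finset.sum_congr rfl fun i _ => ?_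
  rw [mul_div_assoc, one_div_sub_div_sub_eq_mul_sub (hz i) (ht i) hzt]
  ring

end PartialFractions

theorem prototype_error_formula_general (N : ℕ) (x : Fin (N+1) → ℝ)
    (l : Fin (N+1) → ℝ) (z : ℂ) (t : ℝ)
    (hz : ∀ i, z ≠ (x i : ℂ)) (ht : ∀ i, t ≠ x i) (htz : (t : ℂ) ≠ z)
    (hden : (∑ i, (l i : ℂ) / ((t : ℂ) - (x i : ℂ))) ≠ 0) :
    1 / (z - (t : ℂ)) -
        (∑ i, (l i : ℂ) * (1 / (z - (x i : ℂ))) / ((t : ℂ) - (x i : ℂ))) /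
          (∑ i, (l i : ℂ) / ((t : ℂ) - (x i : ℂ))) =
      (1 / (z - (t : ℂ))) *
        ((∑ i, (l i : ℂ) / (z - (x i : ℂ))) / (∑ i, (l i : ℂ) / ((t : ℂ) - (x i : ℂ)))) := by
  have hzx : ∀ i, z - (x i : ℂ) ≠ 0 := fun i => sub_ne_zero.mpr (hz i)
  have htx : ∀ i, (t : ℂ) - (x i : ℂ) ≠ 0 := fun i => sub_ne_zero.mpr (by exact_mod_cast ht i)
  have hzt : z - (t : ℂ) ≠ 0 := sub_ne_zero.mpr htz.symm
  rw [sum_weighted_cauchy_div_eq _ _ _ hzx htx hzt]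
  field_simp
  ring

/-- Exact error formula for the barycentric interpolant of h(x,z) = 1/(z-x). -/
theorem prototype_error_formula (N : ℕ) (x : Fin (N+1) → ℝ) (hx : Function.Injective x)
    (l : Fin (N+1) → ℝ) (hl : ∀ i, l i ≠ 0) (z : ℂ) (t : ℝ)
    (hz : ∀ i, z ≠ (x i : ℂ)) (ht : ∀ i, t ≠ x i) (htz : (t : ℂ) ≠ z)
    (hden : (∑ i, (l i : ℂ) / ((t : ℂ) - (x i : ℂ))) ≠ 0) :
    1 / (z - (t : ℂ)) -
        (∑ i, (l i : ℂ) * (1 / (z - (x i : ℂ))) / ((t : ℂ) - (x i : ℂ))) /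
          (∑ i, (l i : ℂ) / ((t : ℂ) - (x i : ℂ))) =
      (1 / (z - (t : ℂ))) *
        ((∑ i, (l i : ℂ) / (z - (x i : ℂ))) / (∑ i, (l i : ℂ) / ((t : ℂ) - (x i : ℂ)))) :=
  prototype_error_formula_general N x l z t hz ht htz hden
end

section
/- If f is analytic inside and on a closed contour C enclosing the interval [δ,T] with all nodes x_i in [δ,T] and C avoiding the nodes, then the barycentric interpolation error admits the representation f(x) − r(x) = (1/(2πi)) ∮_C (f(z)/(z−x)) · (Σ_i λ_i/(z−x_i))/(Σ_i λ_i/(x−x_i)) dz for x ∈ [δ,T] not a node, where r is the barycentric rational interpolant of f at the x_i. -/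
open Complex Metric Set Finset

lemma circleIntegral_finset_sum {ι : Type*} (s : Finset ι) (F : ι → ℂ → ℂ) (c : ℂ) (R : ℝ)
    (h : ∀ i ∈ s, CircleIntegrable (F i) c R) :
    (∮ z in C(c, R), ∑ i ∈ s, F i z) = ∑ i ∈ s, ∮ z in C(c, R), F i z := by
  simp only [circleIntegral, smul_sum]
  exact intervalIntegral.integral_finset_sum fun i hi => (circleIntegrable_iff R).mp (h i hi)

/-- Contour-integral representation of the barycentric interpolation error. -/
theorem contour_error_representation (N : ℕ) (δ T : ℝ) (hδT : δ < T)
    (x : Fin (N+1) → ℝ) (hx : Function.Injective x) (hxin : ∀ i, x i ∈ Set.Icc δ T)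
    (l : Fin (N+1) → ℝ) (hl : ∀ i, l i ≠ 0)
    (c : ℂ) (R : ℝ) (hR : 0 < R)
    (hsub : ∀ a ∈ Set.Icc δ T, (a : ℂ) ∈ Metric.ball c R)
    (f : ℂ → ℂ) (hf : DifferentiableOn ℂ f (Metric.closedBall c R))
    (t : ℝ) (ht : t ∈ Set.Icc δ T) (htn : ∀ i, t ≠ x i)
    (hden : (∑ i, (l i : ℂ) / ((t : ℂ) - (x i : ℂ))) ≠ 0) :
    f t - (∑ i, (l i : ℂ) * f (x i) / ((t : ℂ) - (x i : ℂ))) /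
        (∑ i, (l i : ℂ) / ((t : ℂ) - (x i : ℂ))) =
      (1 / (2 * Real.pi * Complex.I)) *
        ∮ z in C(c, R), (f z / (z - (t : ℂ))) *
          ((∑ i, (l i : ℂ) / (z - (x i : ℂ))) /
            (∑ i, (l i : ℂ) / ((t : ℂ) - (x i : ℂ)))) := by
  set D : ℂ := ∑ i, (l i : ℂ) / ((t : ℂ) - (x i : ℂ)) with hDdef
  have hR0 : (0 : ℝ) ≤ R := hR.le
  have htball : (t : ℂ) ∈ ball c R := hsub t ht
  have hxball : ∀ i, ((x i : ℝ) : ℂ) ∈ ball c R := fun i => hsub (x i) (hxin i)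
  have htx : ∀ i, (t : ℂ) - (x i : ℂ) ≠ 0 := by
    intro i h
    exact htn i (by exact_mod_cast sub_eq_zero.mp h)
  have hsphere_ne : ∀ w : ℂ, w ∈ ball c R → ∀ z ∈ sphere c R, z - w ≠ 0 := by
    intro w hw z hz h0
    rw [sub_eq_zero] at h0
    subst h0
    rw [mem_ball] at hw
    rw [mem_sphere] at hz
    exact absurd hz (ne_of_lt hw)
  have hcont : ContinuousOn f (sphere c R) := hf.continuousOn.mono sphere_subset_closedBall
  -- Cauchy integral formula
  have key : ∀ w ∈ ball c R,
      (∮ z in C(c, R), (z - w)⁻¹ • f z) = (2 * ↑Real.pi * Complex.I : ℂ) • f w :=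
    fun w hw => hf.circleIntegral_sub_inv_smul hw
  -- integrability
  have hint : ∀ w ∈ ball c R, CircleIntegrable (fun z => (z - w)⁻¹ * f z) c R := by
    intro w hw
    refine ContinuousOn.circleIntegrable hR0 (ContinuousOn.mul ?_ hcont)
    exact ContinuousOn.inv₀ (by fun_prop) fun z hz => hsphere_ne w hw z hz
  set a : Fin (N+1) → ℂ := fun i => (l i : ℂ) / (((t : ℂ) - (x i : ℂ)) * D) with hadef
  -- rewrite the contour integral
  have hEq : circleIntegral (fun z => (f z / (z - (t : ℂ))) *
        ((∑ i, (l i : ℂ) / (z - (x i : ℂ))) / D)) c R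
      = circleIntegral (fun z => ∑ i, a i *
        (((z - (t : ℂ))⁻¹ * f z) - ((z - (x i : ℂ))⁻¹ * f z))) c R := by
    refine circleIntegral.integral_congr hR0 fun z hz => ?_
    have hzt : z - (t : ℂ) ≠ 0 := hsphere_ne _ htball z hz
    have hzx : ∀ i, z - ((x i : ℝ) : ℂ) ≠ 0 := fun i => hsphere_ne _ (hxball i) z hz
    have : (f z / (z - (t : ℂ))) * ((∑ i, (l i : ℂ) / (z - (x i : ℂ))) / D)
        = ∑ i, (f z / (z - (t : ℂ))) * (((l i : ℂ) / (z - (x i : ℂ))) / D) := by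
      rw [Finset.sum_div, Finset.mul_sum]
    rw [this]
    refine Finset.sum_congr rfl fun i _ => ?_
    rw [hadef]
    field_simp [hzt, hzx i, htx i, hden]
    ring
  have hsum : circleIntegral (fun z => ∑ i, a i *
        (((z - (t : ℂ))⁻¹ * f z) - ((z - (x i : ℂ))⁻¹ * f z))) c R
      = ∑ i, a i * ((2 * ↑Real.pi * Complex.I) * f t - (2 * ↑Real.pi * Complex.I) * f (x i)) := by
    rw [circleIntegral_finset_sum]
    · refine Finset.sum_congr rfl fun i _ => ?_
      have h1 : (∮ z in C(c, R), a i *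
            (((z - (t : ℂ))⁻¹ * f z) - ((z - (x i : ℂ))⁻¹ * f z)))
          = a i • ((∮ z in C(c, R), (z - (t : ℂ))⁻¹ * f z)
              - (∮ z in C(c, R), (z - (x i : ℂ))⁻¹ * f z)) := by
        rw [← circleIntegral.integral_sub (hint _ htball) (hint _ (hxball i)),
          ← circleIntegral.integral_smul]
        simp [smul_eq_mul]
      rw [h1]
      have h2 := key _ htball
      have h3 := key _ (hxball i)
      simp only [smul_eq_mul] at h2 h3 ⊢
      rw [h2, h3]
    · intro i _
      exact IntervalIntegrable.const_mul ((hint _ htball).sub (hint _ (hxball i))) (a i)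
  rw [hEq, hsum]
  have hpi : (2 * (Real.pi : ℂ) * Complex.I) ≠ 0 := by
    simp [Real.pi_ne_zero, Complex.I_ne_zero]
  -- simplify the RHS
  have : (1 / (2 * (Real.pi : ℂ) * Complex.I)) *
      ∑ i, a i * ((2 * ↑Real.pi * Complex.I) * f t - (2 * ↑Real.pi * Complex.I) * f (x i))
      = ∑ i, a i * (f t - f (x i)) := by
    rw [Finset.mul_sum]
    refine Finset.sum_congr rfl fun i _ => ?_
    field_simp [hpi]
  rw [this]
  have hsplit : ∀ i : Fin (N+1), a i * (f t - f (x i))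
      = f ↑t * ((l i : ℂ) / ((t : ℂ) - (x i : ℂ)) / D)
        - ((l i : ℂ) * f (x i) / ((t : ℂ) - (x i : ℂ))) / D := by
    intro i
    rw [hadef]
    field_simp [htx i, hden]
  calc f ↑t - (∑ i, (l i : ℂ) * f (x i) / ((t : ℂ) - (x i : ℂ))) / D
      = f ↑t * (D / D) - (∑ i, (l i : ℂ) * f (x i) / ((t : ℂ) - (x i : ℂ))) / D := by
        rw [div_self hden, mul_one]
    _ = ∑ i, a i * (f t - f (x i)) := by
        simp only [hsplit, Finset.sum_sub_distrib, ← Finset.mul_sum, ← Finset.sum_div, hDdef]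
end

section
/- Under the contour representation of the interpolation error, one has the uniform bound ‖f − r‖_{∞,[δ,T]} ≤ D · sup_{z∈C} |Σ_i λ_i/(z−x_i)| / min_{x∈[δ,T]} |Σ_i λ_i/(x−x_i)|, where D = length(C)·max_{z∈C}|f(z)| / (2π·dist([δ,T],C)), provided the denominator Σ_i λ_i/(x−x_i) does not vanish on [δ,T]. -/
/-!
With `s(z) = ∑ λᵢ / (z - xᵢ)` and `n(t) = ∑ λᵢ f(xᵢ) / (t - xᵢ)`, splitting `1 / ((z - xᵢ)(z - t))`
into partial fractions and applying Cauchy's formula at `t` and at each node gives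
`∮ f(z) s(z) / (z - t) dz = 2πi (f(t) s(t) - n(t))`. Hence the interpolation error `f(t) - n(t)/s(t)`
is this integral divided by `2πi s(t)`, and the standard length estimate of the integral bounds it.
-/

open Complex Metric Real

section

variable {f : ℂ → ℂ} {c a t : ℂ} {R : ℝ}

theorem ContinuousOn.div_sub_of_mem_ball (hf : ContinuousOn f (sphere c R)) (ha : a ∈ ball c R) :
    ContinuousOn (fun z => f z / (z - a)) (sphere c R) :=
  hf.div (continuousOn_id.sub continuousOn_const) fun _ hz =>
    sub_ne_zero.2 (sphere_disjoint_ball.ne_of_mem hz ha)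

theorem circleIntegral_div_sub_div_sub (hf : DifferentiableOn ℂ f (closedBall c R))
    (ha : a ∈ ball c R) (ht : t ∈ ball c R) (hat : a ≠ t) :
    (∮ z in C(c, R), f z / (z - a) / (z - t)) = 2 * π * I * ((f t - f a) / (t - a)) := by
  have hR : 0 ≤ R := (pos_of_mem_ball ha).le
  have hfs : ContinuousOn f (sphere c R) := hf.continuousOn.mono sphere_subset_closedBall
  have cauchy : ∀ w ∈ ball c R, (∮ z in C(c, R), f z / (z - w)) = 2 * π * I * f w := fun w hw =>
    circleIntegral_div_sub_of_differentiable_on_off_countable Set.countable_empty hw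
      hf.continuousOn fun z hz => hf.differentiableAt (closedBall_mem_nhds_of_mem hz.1)
  have partial_fractions : Set.EqOn (fun z => f z / (z - a) / (z - t))
      (fun z => (t - a)⁻¹ * (f z / (z - t) - f z / (z - a))) (sphere c R) := fun z hz => by
    have := sub_ne_zero.2 (sphere_disjoint_ball.ne_of_mem hz ha)
    have := sub_ne_zero.2 (sphere_disjoint_ball.ne_of_mem hz ht)
    have := sub_ne_zero.2 hat.symm
    field_simp
    ring
  rw [circleIntegral.integral_congr hR partial_fractions, circleIntegral.integral_const_mul,
    circleIntegral.integral_sub ((hfs.div_sub_of_mem_ball ht).circleIntegrable hR)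
      ((hfs.div_sub_of_mem_ball ha).circleIntegrable hR), cauchy t ht, cauchy a ha]
  ring

theorem circleIntegral_mul_sum_div_sub_div_sub {ι : Type*} (s : Finset ι) (w x : ι → ℂ)
    (hf : DifferentiableOn ℂ f (closedBall c R)) (hx : ∀ i ∈ s, x i ∈ ball c R)
    (ht : t ∈ ball c R) (hxt : ∀ i ∈ s, x i ≠ t) :
    (∮ z in C(c, R), f z * (∑ i ∈ s, w i / (z - x i)) / (z - t)) =
      2 * π * I * (f t * ∑ i ∈ s, w i / (t - x i) - ∑ i ∈ s, w i * f (x i) / (t - x i)) := by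
  have hR : 0 ≤ R := (pos_of_mem_ball ht).le
  have hfs : ContinuousOn f (sphere c R) := hf.continuousOn.mono sphere_subset_closedBall
  have expand : (fun z => f z * (∑ i ∈ s, w i / (z - x i)) / (z - t)) =
      fun z => ∑ i ∈ s, w i * (f z / (z - x i) / (z - t)) := by
    ext z
    simp only [Finset.mul_sum, Finset.sum_div]
    exact Finset.sum_congr rfl fun i _ => by ring
  rw [expand, circleIntegral.integral_fun_sum (f := fun i z => w i * (f z / (z - x i) / (z - t)))
    fun i hi => (continuousOn_const.mul
      ((hfs.div_sub_of_mem_ball (hx i hi)).div_sub_of_mem_ball ht)).circleIntegrable hR]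
  simp only [circleIntegral.integral_const_mul, Finset.mul_sum, ← Finset.sum_sub_distrib]
  refine Finset.sum_congr rfl fun i hi => ?_
  rw [circleIntegral_div_sub_div_sub hf (hx i hi) ht (hxt i hi)]
  ring

theorem sub_div_eq_circleIntegral_div {ι : Type*} (s : Finset ι) (w x : ι → ℂ)
    (hf : DifferentiableOn ℂ f (closedBall c R)) (hx : ∀ i ∈ s, x i ∈ ball c R)
    (ht : t ∈ ball c R) (hxt : ∀ i ∈ s, x i ≠ t) (hden : ∑ i ∈ s, w i / (t - x i) ≠ 0) :
    f t - (∑ i ∈ s, w i * f (x i) / (t - x i)) / ∑ i ∈ s, w i / (t - x i) =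
      (∮ z in C(c, R), f z * (∑ i ∈ s, w i / (z - x i)) / (z - t)) /
        (2 * π * I * ∑ i ∈ s, w i / (t - x i)) := by
  rw [circleIntegral_mul_sum_div_sub_div_sub s w x hf hx ht hxt,
    mul_div_mul_left _ _ two_pi_I_ne_zero]
  field_simp

theorem norm_circleIntegral_mul_div_sub_le {g : ℂ → ℂ} {M S d : ℝ} (hR : 0 ≤ R) (hd : 0 < d)
    (hM : ∀ z ∈ sphere c R, ‖f z‖ ≤ M) (hS : ∀ z ∈ sphere c R, ‖g z‖ ≤ S)
    (hdist : ∀ z ∈ sphere c R, d ≤ dist t z) :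
    ‖∮ z in C(c, R), f z * g z / (z - t)‖ ≤ 2 * π * R * (M * S / d) := by
  refine circleIntegral.norm_integral_le_of_norm_le_const hR fun z hz => ?_
  rw [norm_div, norm_mul, ← dist_eq_norm, dist_comm]
  have hM0 : 0 ≤ M := (norm_nonneg _).trans (hM z hz)
  have hS0 : 0 ≤ S := (norm_nonneg _).trans (hS z hz)
  exact div_le_div₀ (mul_nonneg hM0 hS0) (mul_le_mul (hM z hz) (hS z hz) (norm_nonneg _) hM0) hd
    (hdist z hz)

end

theorem contour_error_bound_general (N : ℕ) (δ T : ℝ)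
    (x : Fin (N+1) → ℝ) (hxin : ∀ i, x i ∈ Set.Icc δ T)
    (l : Fin (N+1) → ℝ)
    (c : ℂ) (R : ℝ)
    (hsub : ∀ a ∈ Set.Icc δ T, (a : ℂ) ∈ Metric.ball c R)
    (f : ℂ → ℂ) (hf : DifferentiableOn ℂ f (Metric.closedBall c R))
    (M S m d : ℝ) (hm : 0 < m) (hd : 0 < d)
    (hM : ∀ z ∈ Metric.sphere c R, ‖f z‖ ≤ M)
    (hS : ∀ z ∈ Metric.sphere c R, ‖∑ i, (l i : ℂ) / (z - (x i : ℂ))‖ ≤ S)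
    (hdist : ∀ a ∈ Set.Icc δ T, ∀ z ∈ Metric.sphere c R, d ≤ dist (a : ℂ) z)
    (hmin : ∀ a ∈ Set.Icc δ T, (∀ i, a ≠ x i) →
      m ≤ ‖∑ i, (l i : ℂ) / ((a : ℂ) - (x i : ℂ))‖) :
    ∀ t ∈ Set.Icc δ T, (∀ i, t ≠ x i) →
      ‖f t - (∑ i, (l i : ℂ) * f (x i) / ((t : ℂ) - (x i : ℂ))) /
          (∑ i, (l i : ℂ) / ((t : ℂ) - (x i : ℂ)))‖
        ≤ ((2 * Real.pi * R) * M / (2 * Real.pi * d)) * (S / m) := by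
  intro t ht htx
  have hden : m ≤ ‖∑ i, (l i : ℂ) / ((t : ℂ) - (x i : ℂ))‖ := hmin t ht htx
  have hball : (t : ℂ) ∈ ball c R := hsub t ht
  have hxt : ∀ i ∈ Finset.univ, (x i : ℂ) ≠ t := fun i _ => mod_cast (htx i).symm
  rw [sub_div_eq_circleIntegral_div Finset.univ (fun i => (l i : ℂ)) (fun i => (x i : ℂ)) hf
    (fun i _ => hsub (x i) (hxin i)) hball hxt (norm_pos_iff.1 (hm.trans_le hden)),
    norm_div, norm_mul, show ‖(2 * π * I : ℂ)‖ = 2 * π by simp [pi_pos.le]]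
  have hI := norm_circleIntegral_mul_div_sub_le (pos_of_mem_ball hball).le hd hM hS (hdist t ht)
  calc _ ≤ 2 * π * R * (M * S / d) / (2 * π * m) :=
        div_le_div₀ ((norm_nonneg _).trans hI) hI (by positivity) (by gcongr)
    _ = _ := by field_simp

/-- Uniform bound on the interpolation error from the contour representation. -/
theorem contour_error_bound (N : ℕ) (δ T : ℝ) (hδT : δ < T)
    (x : Fin (N+1) → ℝ) (hx : Function.Injective x) (hxin : ∀ i, x i ∈ Set.Icc δ T)
    (l : Fin (N+1) → ℝ) (hl : ∀ i, l i ≠ 0)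
    (c : ℂ) (R : ℝ) (hR : 0 < R)
    (hsub : ∀ a ∈ Set.Icc δ T, (a : ℂ) ∈ Metric.ball c R)
    (f : ℂ → ℂ) (hf : DifferentiableOn ℂ f (Metric.closedBall c R))
    (M S m d : ℝ) (hm : 0 < m) (hd : 0 < d)
    (hM : ∀ z ∈ Metric.sphere c R, ‖f z‖ ≤ M)
    (hS : ∀ z ∈ Metric.sphere c R, ‖∑ i, (l i : ℂ) / (z - (x i : ℂ))‖ ≤ S)
    (hdist : ∀ a ∈ Set.Icc δ T, ∀ z ∈ Metric.sphere c R, d ≤ dist (a : ℂ) z)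
    (hmin : ∀ a ∈ Set.Icc δ T, (∀ i, a ≠ x i) →
      m ≤ ‖∑ i, (l i : ℂ) / ((a : ℂ) - (x i : ℂ))‖) :
    ∀ t ∈ Set.Icc δ T, (∀ i, t ≠ x i) →
      ‖f t - (∑ i, (l i : ℂ) * f (x i) / ((t : ℂ) - (x i : ℂ))) /
          (∑ i, (l i : ℂ) / ((t : ℂ) - (x i : ℂ)))‖
        ≤ ((2 * Real.pi * R) * M / (2 * Real.pi * d)) * (S / m) :=
  contour_error_bound_general N δ T x hxin l c R hsub f hf M S m d hm hd hM hS hdist hmin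
end

section
/- Scaled-node algebraic localization: for the transformed Chebyshev nodes x_i = T((cos(iπ/N)+1)/2)^p with p > 1, the proportion of nodes lying in [0, εT] tends, as N → ∞, to (2/π) arcsin(ε^{1/(2p)}); in particular, for any ε ∈ (0,1) this proportion grows as p increases, i.e., nodes cluster at the origin. -/
/-!
By the half-angle formula `(cos t + 1) / 2 = cos (t / 2) ^ 2`, the node with index `i` lies in
`[0, εT]` exactly when `i * π / N ≥ 2 * arccos (ε ^ (1 / (2 * p)))`, i.e. when `i ≥ c * N` with
`c = (2 / π) * arccos (ε ^ (1 / (2 * p)))`. The proportion of such `i` among `0, …, N` is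
`1 - ⌈c * N⌉ / (N + 1) → 1 - c = (2 / π) * arcsin (ε ^ (1 / (2 * p)))`. Since `ε < 1`, the power
`ε ^ (1 / (2 * p))` increases with `p`, and so does the limit.
-/

open Real Filter Finset Topology

lemma card_filter_mul_le_range (c : ℝ) (N : ℕ) :
    #((range (N + 1)).filter fun i : ℕ => c * N ≤ i) = N + 1 - ⌈c * N⌉₊ := by
  simp_rw [← Nat.ceil_le, range_eq_Ico, Ico_filter_le, Nat.card_Ico, zero_max]

lemma tendsto_card_filter_mul_le_range_div (c : ℝ) (hc₀ : 0 ≤ c) (hc₁ : c ≤ 1) :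
    Tendsto (fun N : ℕ => (#((range (N + 1)).filter fun i : ℕ => c * N ≤ i) : ℝ) / (N + 1))
      atTop (𝓝 (1 - c)) := by
  have hceil : Tendsto (fun N : ℕ => (⌈c * N⌉₊ : ℝ) / N * (N / (N + 1))) atTop (𝓝 (c * 1)) :=
    ((tendsto_nat_ceil_mul_div_atTop hc₀).comp tendsto_natCast_atTop_atTop).mul
      (tendsto_natCast_div_add_atTop 1)
  rw [mul_one] at hceil
  refine (tendsto_const_nhds.sub hceil).congr' ?_
  filter_upwards [eventually_ne_atTop 0] with N hN
  have hle : ⌈c * N⌉₊ ≤ N + 1 :=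
    (Nat.ceil_le.2 (mul_le_of_le_one_left N.cast_nonneg hc₁)).trans N.le_succ
  rw [card_filter_mul_le_range, Nat.cast_sub hle]
  field_simp
  push_cast
  ring

lemma cos_le_iff_arccos_le {r x : ℝ} (hr : -1 ≤ r) (hx₀ : 0 ≤ x) (hxπ : x ≤ π) :
    cos x ≤ r ↔ arccos r ≤ x := by
  rcases le_total r 1 with hr₁ | hr₁
  · conv_lhs => rw [← cos_arccos hr hr₁]
    exact strictAntiOn_cos.le_iff_ge ⟨hx₀, hxπ⟩ ⟨arccos_nonneg r, arccos_le_pi r⟩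
  · simp [arccos_eq_zero.2 hr₁, hx₀, (cos_le_one x).trans hr₁]

lemma cos_add_one_div_two_rpow_le_iff {p ε t : ℝ} (hp : 0 < p) (hε : 0 < ε) (ht₀ : 0 ≤ t)
    (htπ : t ≤ π) : ((cos t + 1) / 2) ^ p ≤ ε ↔ 2 * arccos (ε ^ (1 / (2 * p))) ≤ t := by
  have hcos : 0 ≤ cos (t / 2) := cos_nonneg_of_mem_Icc ⟨by linarith, by linarith⟩
  have hhalf : (cos t + 1) / 2 = cos (t / 2) ^ 2 := by
    rw [cos_sq (t / 2)]; ring_nf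
  rw [hhalf, ← rpow_natCast_mul hcos, one_div, ← le_rpow_inv_iff_of_pos hcos hε.le (by positivity),
    cos_le_iff_arccos_le (by linarith [rpow_pos_of_pos hε (2 * p)⁻¹]) (by linarith) (by linarith)]
  push_cast
  constructor <;> intro h <;> linarith

lemma strictMonoOn_arcsin_rpow_one_div {ε : ℝ} (hε₀ : 0 < ε) (hε₁ : ε < 1) :
    StrictMonoOn (fun q : ℝ => arcsin (ε ^ (1 / (2 * q)))) (Set.Ioi 0) := by
  intro q (hq : 0 < q) q' hq' hqq'
  have hmem : ∀ q : ℝ, 0 < q → ε ^ (1 / (2 * q)) ∈ Set.Icc (-1 : ℝ) 1 := fun q hq =>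
    ⟨by linarith [rpow_pos_of_pos hε₀ (1 / (2 * q))], rpow_le_one hε₀.le hε₁.le (by positivity)⟩
  refine strictMonoOn_arcsin (hmem q hq) (hmem q' hq') (rpow_lt_rpow_of_exponent_gt hε₀ hε₁ ?_)
  gcongr

/-- Scaled Chebyshev nodes cluster at the origin: the limiting proportion of nodes in [0, εT]
is (2/π) arcsin(ε^{1/(2p)}), which is increasing in p. -/
theorem scaled_node_clustering (T p ε : ℝ) (hT : 0 < T) (hp : 1 < p)
    (hε : ε ∈ Set.Ioo (0 : ℝ) 1) :
    Filter.Tendsto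
      (fun N : ℕ =>
        (((Finset.range (N+1)).filter
          (fun i : ℕ => T * ((Real.cos ((i : ℝ) * Real.pi / (N : ℝ)) + 1) / 2) ^ p ≤ ε * T)).card : ℝ)
            / (N + 1 : ℝ))
      Filter.atTop (nhds (2 / Real.pi * Real.arcsin (ε ^ (1 / (2 * p))))) ∧
    ∀ q q' : ℝ, 1 < q → q < q' →
      2 / Real.pi * Real.arcsin (ε ^ (1 / (2 * q))) <
        2 / Real.pi * Real.arcsin (ε ^ (1 / (2 * q'))) := by
  obtain ⟨hε₀, hε₁⟩ := hε
  refine ⟨?_, fun q q' hq hqq' => ?_⟩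
  · set c := 2 * arccos (ε ^ (1 / (2 * p))) / π
    have hc : 2 / π * arcsin (ε ^ (1 / (2 * p))) = 1 - c := by
      simp only [c, arccos_eq_pi_div_two_sub_arcsin]
      field_simp
      ring
    have hc₀ : 0 ≤ c := by have := arccos_nonneg (ε ^ (1 / (2 * p))); positivity
    have hc₁ : c ≤ 1 := by
      rw [div_le_one pi_pos]
      linarith [arccos_le_pi_div_two.2 (rpow_pos_of_pos hε₀ (1 / (2 * p))).le]
    rw [hc]
    refine (tendsto_card_filter_mul_le_range_div c hc₀ hc₁).congr' ?_
    filter_upwards [eventually_ne_atTop 0] with N hN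
    have hN : (0 : ℝ) < N := by positivity
    congr 3
    refine filter_congr fun i hi => ?_
    have hiN : (i : ℝ) ≤ N := by exact_mod_cast Nat.lt_succ_iff.mp (mem_range.mp hi)
    rw [mul_comm ε T, mul_le_mul_iff_right₀ hT,
      cos_add_one_div_two_rpow_le_iff (by linarith) hε₀ (by positivity)
        (by rw [div_le_iff₀ hN]; nlinarith [pi_pos]),
      le_div_iff₀ hN, div_mul_eq_mul_div, div_le_iff₀ pi_pos]
  · have hq₀ : (0 : ℝ) < q := zero_lt_one.trans hq
    exact mul_lt_mul_of_pos_left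
      (strictMonoOn_arcsin_rpow_one_div hε₀ hε₁ hq₀ (hq₀.trans hqq') hqq') (by positivity)
end
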